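/- arXiv:2502.03303 — 4 statements merged into one kernel-verified Lean document; each statement's English description precedes it below -/
import Mathlib

section
/- Let X be a complex separable Banach space and T a bounded operator on X such that the closed linear span of the eigenspaces ker(T − λ) for |λ| < 1 equals X and the closed linear span of the eigenspaces ker(T − λ) for |λ| > 1 equals X. Then T is hypercyclic (Godefroy–Shapiro criterion). -/
/-!
The eigenvector conditions make `T` topologically transitive: a vector `u` close to `x`
whose orbit tends to `0`, plus a tiny vector `w n` that `T ^ n` sends to a vector `v` close
to `y`, is a point near `x` that `T ^ n` sends near `y`. Eigenvectors for `|λ| < 1` have the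
first property and eigenvectors for `|λ| > 1` the second (take `w n = λ⁻ⁿ v`). By Birkhoff's
transitivity theorem, a transitive operator on a separable Banach space is hypercyclic, since
the vectors with dense orbit form a countable intersection of dense open sets.
-/

open Filter Topology Set

theorem dense_setOf_denseRange_apply {ι α β : Type*} [TopologicalSpace α] [BaireSpace α]
    [TopologicalSpace β] [SecondCountableTopology β] {g : ι → α → β}
    (hg : ∀ i, Continuous (g i))
    (htrans : ∀ (U : Set α) (V : Set β), IsOpen U → IsOpen V → U.Nonempty → V.Nonempty →
      ∃ i, (U ∩ g i ⁻¹' V).Nonempty) :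
    Dense {x | DenseRange fun i => g i x} := by
  obtain ⟨b, hb_countable, hb_empty, hb⟩ := TopologicalSpace.exists_countable_basis β
  have hvisit_open : ∀ V ∈ b, IsOpen (⋃ i, g i ⁻¹' V) := fun V hV =>
    isOpen_iUnion fun i => (hb.isOpen hV).preimage (hg i)
  have hvisit_dense : ∀ V ∈ b, Dense (⋃ i, g i ⁻¹' V) := by
    intro V hV
    refine dense_iff_inter_open.2 fun U hU hU_ne => ?_
    obtain ⟨i, x, hxU, hxV⟩ := htrans U V hU (hb.isOpen hV) hU_ne
      (nonempty_iff_ne_empty.2 fun h => hb_empty (h ▸ hV))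
    exact ⟨x, hxU, mem_iUnion.2 ⟨i, hxV⟩⟩
  refine (dense_biInter_of_isOpen hvisit_open hb_countable hvisit_dense).mono fun x hx => ?_
  refine hb.dense_iff.2 fun V hV _ => ?_
  obtain ⟨i, hi⟩ := mem_iUnion.1 (mem_iInter₂.1 hx V hV)
  exact ⟨g i x, hi, i, rfl⟩

namespace ContinuousLinearMap

section Semiring

variable {R M : Type*} [Semiring R] [AddCommMonoid M] [TopologicalSpace M] [Module R M]

theorem pow_apply_of_apply_eq_smul {T : M →L[R] M} {a : R} {x : M} (hx : T x = a • x)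
    (n : ℕ) : (T ^ n) x = a ^ n • x := by
  induction n with
  | zero => rw [pow_zero, pow_zero, one_apply_eq_self, one_smul]
  | succ n ih => rw [pow_succ, mul_apply_eq_comp, hx, map_smul, ih, smul_smul, ← pow_succ']

variable [ContinuousAdd M] [ContinuousConstSMul R M]

def stableSubmodule (T : M →L[R] M) : Submodule R M where
  carrier := {x | Tendsto (fun n : ℕ => (T ^ n) x) atTop (𝓝 0)}
  add_mem' hx hy := by simpa only [mem_ofPred_eq, map_add, add_zero] using hx.add hy
  zero_mem' := by simpa only [mem_ofPred_eq, map_zero] using tendsto_const_nhds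
  smul_mem' c x hx := by simpa only [mem_ofPred_eq, map_smul, smul_zero] using hx.const_smul c

theorem mem_stableSubmodule {T : M →L[R] M} {x : M} :
    x ∈ T.stableSubmodule ↔ Tendsto (fun n : ℕ => (T ^ n) x) atTop (𝓝 0) :=
  Iff.rfl

def unstableSubmodule (T : M →L[R] M) : Submodule R M where
  carrier := {y | ∃ w : ℕ → M, Tendsto w atTop (𝓝 0) ∧ ∀ n, (T ^ n) (w n) = y}
  add_mem' := by
    rintro _ _ ⟨w₁, hw₁, h₁⟩ ⟨w₂, hw₂, h₂⟩
    exact ⟨fun n => w₁ n + w₂ n, by simpa only [add_zero] using hw₁.add hw₂,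
      fun n => by rw [map_add, h₁, h₂]⟩
  zero_mem' := ⟨0, tendsto_const_nhds, fun n => map_zero _⟩
  smul_mem' c y := by
    rintro ⟨w, hw, h⟩
    exact ⟨fun n => c • w n, by simpa only [smul_zero] using hw.const_smul c,
      fun n => by rw [map_smul, h]⟩

theorem eventually_nonempty_inter_preimage_pow {T : M →L[R] M}
    (hstable : Dense (T.stableSubmodule : Set M)) (hunstable : Dense (T.unstableSubmodule : Set M))
    {U V : Set M} (hU : IsOpen U) (hV : IsOpen V) (hU_ne : U.Nonempty) (hV_ne : V.Nonempty) :
    ∀ᶠ n : ℕ in atTop, (U ∩ (T ^ n) ⁻¹' V).Nonempty := by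
  obtain ⟨u, huU, hu⟩ := hstable.inter_open_nonempty U hU hU_ne
  obtain ⟨v, hvV, w, hw, hwv⟩ := hunstable.inter_open_nonempty V hV hV_ne
  have hnear_u : Tendsto (fun n => u + w n) atTop (𝓝 u) := by
    simpa only [add_zero] using tendsto_const_nhds.add hw
  have hnear_v : Tendsto (fun n => (T ^ n) (u + w n)) atTop (𝓝 v) := by
    simp only [map_add, hwv]
    simpa only [zero_add] using (mem_stableSubmodule.1 hu).add tendsto_const_nhds
  filter_upwards [hnear_u.eventually (hU.mem_nhds huU), hnear_v.eventually (hV.mem_nhds hvV)]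
    with n hnU hnV using ⟨u + w n, hnU, hnV⟩

end Semiring

section NormedField

variable {𝕜 M : Type*} [NormedField 𝕜] [AddCommMonoid M] [TopologicalSpace M] [Module 𝕜 M]
  [ContinuousAdd M] [ContinuousSMul 𝕜 M] {T : M →L[𝕜] M} {a : 𝕜} {x : M}

theorem mem_stableSubmodule_of_apply_eq_smul (ha : ‖a‖ < 1) (hx : T x = a • x) :
    x ∈ T.stableSubmodule := by
  rw [mem_stableSubmodule]
  simpa only [pow_apply_of_apply_eq_smul hx, zero_smul]
    using (tendsto_pow_atTop_nhds_zero_of_norm_lt_one ha).smul_const x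

theorem mem_unstableSubmodule_of_apply_eq_smul (ha : 1 < ‖a‖) (hx : T x = a • x) :
    x ∈ T.unstableSubmodule := by
  have ha₀ : a ≠ 0 := norm_pos_iff.1 (one_pos.trans ha)
  have ha_inv : ‖a⁻¹‖ < 1 := by rwa [norm_inv, inv_lt_one₀ (one_pos.trans ha)]
  refine ⟨fun n => a⁻¹ ^ n • x, ?_, fun n => ?_⟩
  · simpa only [zero_smul] using (tendsto_pow_atTop_nhds_zero_of_norm_lt_one ha_inv).smul_const x
  · rw [map_smul, pow_apply_of_apply_eq_smul hx, smul_smul, ← mul_pow, inv_mul_cancel₀ ha₀,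
      one_pow, one_smul]

end NormedField

end ContinuousLinearMap

/-- **Godefroy–Shapiro criterion.** If the eigenvectors of `T` associated to eigenvalues of
modulus `< 1` span a dense subspace of `X`, and likewise for eigenvalues of modulus `> 1`,
then `T` is hypercyclic. -/
theorem godefroy_shapiro_criterion
    {X : Type*} [NormedAddCommGroup X] [NormedSpace ℂ X] [CompleteSpace X]
    [TopologicalSpace.SeparableSpace X]
    (T : X →L[ℂ] X)
    (hminus : Dense ((Submodule.span ℂ {x : X | ∃ lam : ℂ, ‖lam‖ < 1 ∧ T x = lam • x}) : Set X))
    (hplus : Dense ((Submodule.span ℂ {x : X | ∃ lam : ℂ, 1 < ‖lam‖ ∧ T x = lam • x}) : Set X)) :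
    ∃ x : X, Dense (Set.range fun n : ℕ => (T ^ n) x) := by
  have hstable : Dense (T.stableSubmodule : Set X) := hminus.mono <| Submodule.span_le.2 <| by
    rintro x ⟨lam, hlam, hx⟩
    exact T.mem_stableSubmodule_of_apply_eq_smul hlam hx
  have hunstable : Dense (T.unstableSubmodule : Set X) := hplus.mono <| Submodule.span_le.2 <| by
    rintro x ⟨lam, hlam, hx⟩
    exact T.mem_unstableSubmodule_of_apply_eq_smul hlam hx
  have htrans : ∀ U V : Set X, IsOpen U → IsOpen V → U.Nonempty → V.Nonempty →
      ∃ n : ℕ, (U ∩ (T ^ n) ⁻¹' V).Nonempty := fun U V hU hV hU_ne hV_ne =>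
    (T.eventually_nonempty_inter_preimage_pow hstable hunstable hU hV hU_ne hV_ne).exists
  exact (dense_setOf_denseRange_apply (fun n => (T ^ n).continuous) htrans).nonempty
end

section
/- Let X be a complex separable Banach space and T a bounded operator on X. If for some r > 0 the closed linear span of ker(T − λ) over |λ| < r equals X and the closed linear span of ker(T − λ) over |λ| > r equals X, then T is supercyclic. -/
open Filter Topology

/-- If for some `r > 0` the eigenvectors of `T` associated to eigenvalues of modulus `< r`
span a dense subspace of `X`, and likewise for eigenvalues of modulus `> r`, then `T` is
supercyclic: some projective orbit `{c • Tⁿ x}` is dense. -/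
theorem supercyclic_of_spanning_eigenvectors
    {X : Type*} [NormedAddCommGroup X] [NormedSpace ℂ X] [CompleteSpace X]
    [TopologicalSpace.SeparableSpace X]
    (T : X →L[ℂ] X) (r : ℝ) (hr : 0 < r)
    (hminus : Dense ((Submodule.span ℂ {x : X | ∃ lam : ℂ, ‖lam‖ < r ∧ T x = lam • x}) : Set X))
    (hplus : Dense ((Submodule.span ℂ {x : X | ∃ lam : ℂ, r < ‖lam‖ ∧ T x = lam • x}) : Set X)) :
    ∃ x : X, Dense {y : X | ∃ (n : ℕ) (c : ℂ), y = c • (T ^ n) x} := by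
  have hrC : (r : ℂ) ≠ 0 := by exact_mod_cast hr.ne'
  -- eigenvector powers
  have hpow : ∀ (lam : ℂ) (x : X), T x = lam • x → ∀ n : ℕ, (T ^ n) x = lam ^ n • x := by
    intro lam x hx n
    induction n with
    | zero => simp
    | succ n ih =>
      rw [pow_succ, ContinuousLinearMap.mul_apply, hx, map_smul, ih, smul_smul, pow_succ,
        mul_comm]
  -- small eigenvalues: scaled orbit tends to zero
  have hsmall : ∀ u ∈ Submodule.span ℂ {x : X | ∃ lam : ℂ, ‖lam‖ < r ∧ T x = lam • x},
      Tendsto (fun n : ℕ => ((r : ℂ)⁻¹) ^ n • (T ^ n) u) atTop (𝓝 (0 : X)) := by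
    intro u hu
    induction hu using Submodule.span_induction with
    | mem x hx =>
      obtain ⟨lam, hlam, hx⟩ := hx
      have : (fun n : ℕ => ((r : ℂ)⁻¹) ^ n • (T ^ n) x)
          = fun n : ℕ => ((r : ℂ)⁻¹ * lam) ^ n • x := by
        funext n
        rw [hpow lam x hx n, smul_smul, mul_pow]
      rw [this]
      have hnorm : ‖(r : ℂ)⁻¹ * lam‖ < 1 := by
        rw [norm_mul, norm_inv, Complex.norm_real, Real.norm_of_nonneg hr.le]
        rw [inv_mul_lt_one₀ hr]
        exact hlam
      have := (tendsto_pow_atTop_nhds_zero_of_norm_lt_one hnorm).smul_const x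
      simpa using this
    | zero => simp [tendsto_const_nhds]
    | add x y hx hy ihx ihy =>
      have := ihx.add ihy
      simp only [map_add, smul_add, add_zero] at this ⊢
      exact this
    | smul c x hx ihx =>
      have := ihx.const_smul c
      simp only [map_smul, smul_zero] at this ⊢
      simpa [smul_comm c] using this
  -- large eigenvalues: backward orbit tending to zero
  have hbig : ∀ v ∈ Submodule.span ℂ {x : X | ∃ lam : ℂ, r < ‖lam‖ ∧ T x = lam • x},
      ∃ w : ℕ → X, Tendsto w atTop (𝓝 (0 : X)) ∧
        ∀ n : ℕ, ((r : ℂ)⁻¹) ^ n • (T ^ n) (w n) = v := by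
    intro v hv
    induction hv using Submodule.span_induction with
    | mem x hx =>
      obtain ⟨mu, hmu, hx⟩ := hx
      have hmu0 : mu ≠ 0 := by
        intro h
        rw [h, norm_zero] at hmu
        exact absurd hmu (not_lt.2 hr.le)
      refine ⟨fun n => ((r : ℂ) * mu⁻¹) ^ n • x, ?_, ?_⟩
      · have hnorm : ‖(r : ℂ) * mu⁻¹‖ < 1 := by
          rw [norm_mul, norm_inv, Complex.norm_real, Real.norm_of_nonneg hr.le]
          rw [mul_inv_lt_iff₀ (norm_pos_iff.2 hmu0), one_mul]
          exact hmu
        have := (tendsto_pow_atTop_nhds_zero_of_norm_lt_one hnorm).smul_const x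
        simpa using this
      · intro n
        rw [map_smul, hpow mu x hx n, smul_smul, smul_smul, ← mul_pow, ← mul_pow]
        rw [show (r : ℂ)⁻¹ * ((r : ℂ) * mu⁻¹) * mu = 1 by field_simp]
        simp
    | zero => exact ⟨fun _ => 0, tendsto_const_nhds, by simp⟩
    | add x y hx hy ihx ihy =>
      obtain ⟨w1, hw1, hw1'⟩ := ihx
      obtain ⟨w2, hw2, hw2'⟩ := ihy
      refine ⟨fun n => w1 n + w2 n, by simpa using hw1.add hw2, fun n => ?_⟩
      rw [map_add, smul_add, hw1' n, hw2' n]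
    | smul c x hx ihx =>
      obtain ⟨w, hw, hw'⟩ := ihx
      refine ⟨fun n => c • w n, by simpa using hw.const_smul c, fun n => ?_⟩
      rw [map_smul, smul_comm, hw' n]
  -- the "hitting" sets
  set O : Set X → Set X := fun V => {x | ∃ n : ℕ, ((r : ℂ)⁻¹) ^ n • (T ^ n) x ∈ V} with hO
  have hOopen : ∀ V : Set X, IsOpen V → IsOpen (O V) := by
    intro V hV
    have : O V = ⋃ n : ℕ, (fun x => ((r : ℂ)⁻¹) ^ n • (T ^ n) x) ⁻¹' V := by
      ext x; simp [hO]
    rw [this]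
    exact isOpen_iUnion fun n => hV.preimage ((T ^ n).continuous.const_smul _)
  have hOdense : ∀ V : Set X, IsOpen V → V.Nonempty → Dense (O V) := by
    intro V hV hVne
    rw [dense_iff_inter_open]
    intro U hU hUne
    obtain ⟨u, hu⟩ := hminus.inter_open_nonempty U hU hUne
    obtain ⟨v, hv⟩ := hplus.inter_open_nonempty V hV hVne
    obtain ⟨w, hw0, hwv⟩ := hbig v hv.2
    have h1 : Tendsto (fun n : ℕ => u + w n) atTop (𝓝 u) := by
      simpa using tendsto_const_nhds.add hw0
    have hU' : ∀ᶠ n : ℕ in atTop, u + w n ∈ U := h1.eventually (hU.eventually_mem hu.1)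
    have h2 : Tendsto (fun n : ℕ => ((r : ℂ)⁻¹) ^ n • (T ^ n) (u + w n)) atTop (𝓝 v) := by
      have : (fun n : ℕ => ((r : ℂ)⁻¹) ^ n • (T ^ n) (u + w n))
          = fun n : ℕ => ((r : ℂ)⁻¹) ^ n • (T ^ n) u + v := by
        funext n; rw [map_add, smul_add, hwv n]
      rw [this]
      simpa using (hsmall u hu.2).add tendsto_const_nhds
    have hV' : ∀ᶠ n : ℕ in atTop, ((r : ℂ)⁻¹) ^ n • (T ^ n) (u + w n) ∈ V :=
      h2.eventually (hV.eventually_mem hv.1)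
    obtain ⟨n, hn1, hn2⟩ := (hU'.and hV').exists
    exact ⟨u + w n, hn1, ⟨n, hn2⟩⟩
  -- Baire category argument over a countable basis
  obtain ⟨B, hBc, hBempty, hB⟩ := TopologicalSpace.exists_countable_basis X
  have hGdense : Dense (⋂ V ∈ B, O V) := by
    refine dense_biInter_of_isOpen (fun V hV => hOopen V (hB.isOpen hV)) hBc
      (fun V hV => hOdense V (hB.isOpen hV) ?_)
    exact Set.nonempty_iff_ne_empty.2 fun h => hBempty (h ▸ hV)
  obtain ⟨x, hx⟩ := hGdense.nonempty
  refine ⟨x, ?_⟩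
  rw [dense_iff_inter_open]
  intro W hW hWne
  obtain ⟨p, hp⟩ := hWne
  obtain ⟨V, hVB, hpV, hVW⟩ := hB.exists_subset_of_mem_open hp hW
  have hxV : x ∈ O V := by
    simp only [Set.mem_iInter] at hx
    exact hx V hVB
  obtain ⟨n, hn⟩ := hxV
  exact ⟨((r : ℂ)⁻¹) ^ n • (T ^ n) x, hVW hn, ⟨n, ((r : ℂ)⁻¹) ^ n, rfl⟩⟩
end

section
/- Let X be a complex separable Banach space, T ∈ B(X). Suppose there exist an open set U ⊂ ℂ and a countable family of analytic maps E_i : U → X such that T E_i(λ) = λ E_i(λ) for all λ ∈ U and i, the closed linear span of {E_i(λ) : λ ∈ U, i} equals X, and every connected component of U intersects the unit circle. Then T has perfectly spanning unimodular eigenvectors: for every countable set D ⊂ 𝕋, the closed linear span of ⋃_{λ ∈ 𝕋 \ D} ker(T − λ) equals X. -/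
open Filter Set Metric
open scoped Topology

/-- The set of real `θ` with `Complex.exp (θ * I) = c` is countable. -/
lemma countable_exp_fiber (c : ℂ) : {θ : ℝ | Complex.exp (θ * Complex.I) = c}.Countable := by
  rcases eq_empty_or_nonempty {θ : ℝ | Complex.exp (θ * Complex.I) = c} with h | ⟨θ₀, hθ₀⟩
  · simp [h]
  refine (Set.countable_range (fun n : ℤ => θ₀ + n * (2 * Real.pi))).mono ?_
  intro θ hθ
  have hθ' : Complex.exp (θ * Complex.I) = c := hθ
  have hθ₀' : Complex.exp (θ₀ * Complex.I) = c := hθ₀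
  have hc : c ≠ 0 := hθ₀' ▸ Complex.exp_ne_zero _
  have h1 : Complex.exp (((θ - θ₀ : ℝ)) * Complex.I) = 1 := by
    have heq : ((θ - θ₀ : ℝ) : ℂ) * Complex.I = θ * Complex.I - θ₀ * Complex.I := by
      push_cast; ring
    rw [heq, Complex.exp_sub, hθ', hθ₀', div_self hc]
  rw [Complex.exp_eq_one_iff] at h1
  obtain ⟨n, hn⟩ := h1
  have h2 : ((θ - θ₀ : ℝ) : ℂ) = (n : ℂ) * (2 * Real.pi) :=
    mul_right_cancel₀ Complex.I_ne_zero
      (hn.trans (by ring : ((n : ℂ) * (2 * Real.pi * Complex.I))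
        = ((n : ℂ) * (2 * Real.pi)) * Complex.I))
  have h3 : θ - θ₀ = (n : ℝ) * (2 * Real.pi) := by exact_mod_cast h2
  exact ⟨n, by simp only []; linarith⟩

/-- `exp (θ * I) = 1` with `θ` real and `0 < |θ| < 1` is impossible. -/
lemma exp_ne_one_of_small (θ : ℝ) (hθ0 : θ ≠ 0) (hθ1 : |θ| < 1) :
    Complex.exp (θ * Complex.I) ≠ 1 := by
  intro h
  rw [Complex.exp_eq_one_iff] at h
  obtain ⟨n, hn⟩ := h
  have h2 : (θ : ℂ) = (n : ℂ) * (2 * Real.pi) :=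
    mul_right_cancel₀ Complex.I_ne_zero
      (hn.trans (by ring : ((n : ℂ) * (2 * Real.pi * Complex.I))
        = ((n : ℂ) * (2 * Real.pi)) * Complex.I))
  have h3 : θ = (n : ℝ) * (2 * Real.pi) := by exact_mod_cast h2
  rcases eq_or_ne n 0 with rfl | hn0
  · simp at h3; exact hθ0 h3
  · have hn1 : (1 : ℝ) ≤ |(n : ℝ)| := by
      rw [← Int.cast_abs, ← Int.cast_one, Int.cast_le]
      exact Int.one_le_abs hn0
    have habs : (1 : ℝ) ≤ |θ| := by
      rw [h3, abs_mul, abs_of_pos (by nlinarith [Real.pi_gt_three] : (0:ℝ) < 2 * Real.pi)]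
      nlinarith [Real.pi_gt_three]
    linarith

/-- Suppose `T` admits a countable family of analytic eigenvector fields `E i : U → X`
(`T (E i λ) = λ • E i λ`) defined on an open set `U ⊆ ℂ`, whose values span a dense subspace
of `X`, and that every connected component of `U` intersects the unit circle. Then `T` has
perfectly spanning unimodular eigenvectors: for every countable `D ⊆ 𝕋`, the closed linear
span of the eigenspaces `ker (T - λ)` over unimodular `λ ∉ D` is all of `X`. -/
theorem perfectly_spanning_of_analytic_eigenfields
    {X : Type*} [NormedAddCommGroup X] [NormedSpace ℂ X] [CompleteSpace X]
    [TopologicalSpace.SeparableSpace X]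
    (T : X →L[ℂ] X)
    {I : Type*} [Countable I]
    (U : Set ℂ) (hU : IsOpen U)
    (E : I → ℂ → X)
    (hanal : ∀ i, DifferentiableOn ℂ (E i) U)
    (heig : ∀ i, ∀ lam ∈ U, T (E i lam) = lam • E i lam)
    (hspan : Dense ((Submodule.span ℂ {x : X | ∃ i, ∃ lam ∈ U, x = E i lam}) : Set X))
    (hcirc : ∀ z ∈ U, (connectedComponentIn U z ∩ Metric.sphere (0 : ℂ) 1).Nonempty) :
    ∀ D : Set ℂ, D.Countable →
      Dense ((Submodule.span ℂ
        {x : X | ∃ lam : ℂ, ‖lam‖ = 1 ∧ lam ∉ D ∧ T x = lam • x}) : Set X) := by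
  intro D hD
  set S : Set X := {x : X | ∃ lam : ℂ, ‖lam‖ = 1 ∧ lam ∉ D ∧ T x = lam • x} with hS
  set M : Submodule ℂ X := (Submodule.span ℂ S).topologicalClosure with hM
  have hMclosed : IsClosed (M : Set X) := Submodule.isClosed_topologicalClosure _
  haveI : IsClosed (M : Set X) := hMclosed
  -- the continuous linear quotient map
  let π : X →L[ℂ] (X ⧸ M) :=
    LinearMap.mkContinuous M.mkQ 1
      (fun x => by simpa using Submodule.Quotient.norm_mk_le M x)
  have hπmem : ∀ x : X, π x = 0 ↔ x ∈ M := by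
    intro x
    simpa [π, LinearMap.mkContinuous_apply] using Submodule.Quotient.mk_eq_zero M (x := x)
  -- Key step: every eigenvector field value lies in `M`.
  have key : ∀ i, ∀ lam ∈ U, E i lam ∈ M := by
    intro i lam hlam
    set O : Set ℂ := connectedComponentIn U lam with hO
    have hOU : O ⊆ U := connectedComponentIn_subset U lam
    have hOopen : IsOpen O := hU.connectedComponentIn
    have hOconn : IsPreconnected O := (isPreconnected_connectedComponentIn)
    obtain ⟨w, hwO, hwS⟩ := hcirc lam hlam
    have hwnorm : ‖w‖ = 1 := by simpa using hwS
    have hw0 : w ≠ 0 := by intro h; rw [h] at hwnorm; simp at hwnorm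
    -- the analytic function we study
    have hg : AnalyticOnNhd ℂ (fun z => π (E i z)) O :=
      ((π.differentiable.comp_differentiableOn (hanal i)).analyticOnNhd hU).mono hOU
    -- the path along the circle through `w`
    set f : ℝ → ℂ := fun θ => w * Complex.exp (θ * Complex.I) with hf
    have hfnorm : ∀ θ, ‖f θ‖ = 1 := by
      intro θ
      rw [hf]
      simp [norm_mul, hwnorm, Complex.norm_exp]
    have hf0 : f 0 = w := by simp [hf]
    have hfcont : Continuous f := by
      apply continuous_const.mul
      exact Complex.continuous_exp.comp (by continuity)
    have hne : ∀ θ : ℝ, θ ≠ 0 → |θ| < 1 → f θ ≠ w := by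
      intro θ hθ0 hθ1 heq
      apply exp_ne_one_of_small θ hθ0 hθ1
      have h' : w * Complex.exp (θ * Complex.I) = w * 1 := by rw [mul_one]; exact heq
      exact mul_left_cancel₀ hw0 h'
    -- the preimage of D is countable
    have hG : (f ⁻¹' D).Countable := by
      have hsub : f ⁻¹' D ⊆ ⋃ d ∈ D, {θ : ℝ | Complex.exp (θ * Complex.I) = d / w} := by
        intro θ hθ
        refine Set.mem_biUnion hθ ?_
        simp only [Set.mem_setOf_eq]
        rw [eq_div_iff hw0]
        exact mul_comm _ _
      exact (hD.biUnion (fun d _ => countable_exp_fiber (d / w))).mono hsub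
    -- frequently near 0, θ avoids the bad set and stays in the right places
    have hfreqθ : ∃ᶠ θ in 𝓝[≠] (0 : ℝ),
        (f θ ∈ O ∧ f θ ∉ D ∧ ‖f θ‖ = 1) := by
      have hGc : ((f ⁻¹' D) ∪ {0}).Countable := hG.union (Set.countable_singleton 0)
      have hdense : Dense ((f ⁻¹' D) ∪ {0} : Set ℝ)ᶜ := hGc.dense_compl ℝ
      have hfreq : ∃ᶠ θ in 𝓝 (0 : ℝ), θ ∈ ((f ⁻¹' D) ∪ {0} : Set ℝ)ᶜ :=
        mem_closure_iff_frequently.1 (hdense 0)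
      have hev1 : ∀ᶠ θ in 𝓝 (0 : ℝ), f θ ∈ O := by
        have hcA := hfcont.continuousAt (x := (0 : ℝ))
        rw [ContinuousAt, hf0] at hcA
        exact hcA (hOopen.mem_nhds hwO)
      rw [frequently_nhdsWithin_iff]
      refine (hfreq.and_eventually hev1).mono ?_
      rintro θ ⟨hθc, hθO⟩
      have hθ0 : θ ≠ 0 := fun h => hθc (Or.inr (by simp [h]))
      exact ⟨⟨hθO, fun h => hθc (Or.inl h), hfnorm θ⟩, hθ0⟩
    -- transfer to frequently near w
    have htend : Tendsto f (𝓝[≠] (0 : ℝ)) (𝓝[≠] w) := by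
      rw [tendsto_nhdsWithin_iff]
      constructor
      · exact tendsto_nhdsWithin_of_tendsto_nhds (hf0 ▸ hfcont.continuousAt)
      · have hev2 : ∀ᶠ θ in 𝓝 (0 : ℝ), |θ| < 1 := by
          have : Set.Ioo (-1 : ℝ) 1 ∈ 𝓝 (0 : ℝ) := Ioo_mem_nhds (by norm_num) (by norm_num)
          filter_upwards [this] with θ hθ
          rw [abs_lt]; exact ⟨hθ.1, hθ.2⟩
        filter_upwards [eventually_nhdsWithin_of_eventually_nhds hev2,
          self_mem_nhdsWithin] with θ h1 h2
        exact hne θ h2 h1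
    have hfreqw : ∃ᶠ z in 𝓝[≠] w, (z ∈ O ∧ z ∉ D ∧ ‖z‖ = 1) :=
      htend.frequently hfreqθ
    have hfreq0 : ∃ᶠ z in 𝓝[≠] w, π (E i z) = 0 := by
      refine hfreqw.mono ?_
      rintro z ⟨hzO, hzD, hznorm⟩
      rw [hπmem]
      apply Submodule.le_topologicalClosure
      apply Submodule.subset_span
      exact ⟨z, hznorm, hzD, heig i z (hOU hzO)⟩
    -- identity theorem
    have hzero := hg.eqOn_zero_of_preconnected_of_frequently_eq_zero hOconn hwO hfreq0
    have : π (E i lam) = 0 := hzero (mem_connectedComponentIn hlam)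
    rwa [hπmem] at this
  -- conclude
  have hgen : {x : X | ∃ i, ∃ lam ∈ U, x = E i lam} ⊆ (M : Set X) := by
    rintro x ⟨i, lam, hlam, rfl⟩
    exact key i lam hlam
  have hle : (Submodule.span ℂ {x : X | ∃ i, ∃ lam ∈ U, x = E i lam} : Set X) ⊆ (M : Set X) :=
    Submodule.span_le.2 hgen
  have hMdense : Dense (M : Set X) := hspan.mono hle
  have hMuniv : (M : Set X) = Set.univ := by
    rw [← hMclosed.closure_eq]
    exact hMdense.closure_eq
  rw [dense_iff_closure_eq, ← Submodule.topologicalClosure_coe]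
  exact hMuniv
end

section
/- Under the same hypotheses (analytic eigenvector fields E_i : U → X spanning X, with every component of U meeting 𝕋), the operator T has a dense set of periodic points; in particular the closed linear span of the eigenspaces ker(T − λ) over all roots of unity λ equals X. -/
/-!
Periodic points of `T` form a subspace containing every eigenvector whose eigenvalue is a root
of unity, so it suffices that such eigenvectors span a dense subspace `P`. Modulo the closure of
`P`, each field `E i` is holomorphic and vanishes at the roots of unity in `U`. Roots of unity
accumulate at every point of the unit circle, which meets every component of `U`, so by the
identity theorem `E i` takes values in the closure of `P`; density of the span of the `E i`
finishes the proof.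
-/

open Filter Topology Set Function Real

namespace Module.End

variable {R M : Type*}

section Semiring

variable [Semiring R] [AddCommMonoid M] [Module R M]

theorem isPeriodicPt_iff_pow_apply {f : Module.End R M} {n : ℕ} {x : M} :
    IsPeriodicPt f n x ↔ (f ^ n) x = x := by
  rw [IsPeriodicPt, IsFixedPt, coe_pow]

def periodicPtsSubmodule (f : Module.End R M) : Submodule R M where
  carrier := periodicPts f
  zero_mem' := ⟨1, one_pos, map_zero f⟩
  add_mem' := by
    rintro x y ⟨m, hm, hx⟩ ⟨n, hn, hy⟩
    refine ⟨m * n, Nat.mul_pos hm hn, ?_⟩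
    have hx' := isPeriodicPt_iff_pow_apply.1 (hx.mul_const n)
    have hy' := isPeriodicPt_iff_pow_apply.1 (hy.const_mul m)
    rw [isPeriodicPt_iff_pow_apply, map_add, hx', hy']
  smul_mem' := by
    rintro c x ⟨n, hn, hx⟩
    refine ⟨n, hn, ?_⟩
    rw [isPeriodicPt_iff_pow_apply, map_smul, isPeriodicPt_iff_pow_apply.1 hx]

end Semiring

theorem eigenspace_le_periodicPtsSubmodule [CommRing R] [AddCommGroup M] [Module R M]
    (f : Module.End R M) {μ : R} (hμ : IsOfFinOrder μ) :
    eigenspace f μ ≤ f.periodicPtsSubmodule := by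
  intro x hx
  obtain ⟨n, hn, hμn⟩ := isOfFinOrder_iff_pow_eq_one.1 hμ
  rcases eq_or_ne x 0 with rfl | hx0
  · exact zero_mem _
  refine ⟨n, hn, isPeriodicPt_iff_pow_apply.2 ?_⟩
  rw [HasEigenvector.pow_apply ⟨hx, hx0⟩, hμn, one_smul]

end Module.End

theorem Circle.isOfFinOrder_exp_two_pi_mul_ratCast (r : ℚ) :
    IsOfFinOrder (Circle.exp (2 * π * r)) := by
  refine isOfFinOrder_iff_pow_eq_one.2 ⟨r.den, r.pos, ?_⟩
  have hden : (r.den : ℝ) * (2 * π * r) = 2 * π * r.num := by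
    rw [mul_left_comm, ← Rat.cast_natCast, ← Rat.cast_mul, mul_comm (r.den : ℚ),
      Rat.mul_den_eq_num, Rat.cast_intCast]
  rw [← Circle.exp_natCast_mul, hden, Circle.exp_two_pi_mul_int]

theorem Complex.frequently_isOfFinOrder_nhdsNE {z : ℂ} (hz : ‖z‖ = 1) :
    ∃ᶠ w in 𝓝[≠] z, IsOfFinOrder w := by
  obtain ⟨t, ht⟩ := Circle.exp_surjective ⟨z, mem_sphere_zero_iff_norm.2 hz⟩
  set θ := t / (2 * π)
  set g : ℝ → ℂ := fun s ↦ Circle.exp (2 * π * s)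
  have hgθ : g θ = z := by
    simp only [g, θ, mul_div_cancel₀ t two_pi_pos.ne', ht]
  set Q := Ioo θ (θ + 1) ∩ range ((↑) : ℚ → ℝ)
  have hθQ : θ ∈ closure Q := by
    have h := closure_mono <| (Rat.denseRange_cast (𝕜 := ℝ)).open_subset_closure_inter
      (isOpen_Ioo (a := θ) (b := θ + 1))
    rw [closure_closure, closure_Ioo (a := θ) (by linarith)] at h
    exact h (left_mem_Icc.2 (by linarith))
  have hgQ : MapsTo g Q ({w | IsOfFinOrder w} \ {z}) := by
    rintro _ ⟨⟨hθs, hsθ⟩, r, rfl⟩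
    refine ⟨Circle.coeHom.isOfFinOrder (Circle.isOfFinOrder_exp_two_pi_mul_ratCast r),
      fun hgr ↦ ?_⟩
    have h2π := two_pi_pos
    have := Circle.exp_injOn_Ico (a := 2 * π * θ) (b := 2 * π * θ + 2 * π) (by linarith)
      ⟨by nlinarith, by nlinarith⟩ ⟨le_rfl, by linarith⟩
      (Circle.coe_injective (hgr.trans hgθ.symm))
    exact hθs.ne' (mul_left_cancel₀ h2π.ne' this)
  change ∃ᶠ w in 𝓝[≠] z, w ∈ {w : ℂ | IsOfFinOrder w}
  rw [← mem_closure_ne_iff_frequently_within]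
  simpa only [hgθ] using map_mem_closure (by fun_prop) hθQ hgQ

theorem AnalyticOnNhd.mapsTo_of_frequently_mem {𝕜 E : Type*} [NontriviallyNormedField 𝕜]
    [NormedAddCommGroup E] [NormedSpace 𝕜 E] {f : 𝕜 → E} {U : Set 𝕜}
    (hf : AnalyticOnNhd 𝕜 f U) (hU : IsPreconnected U) {z₀ : 𝕜} (h₀ : z₀ ∈ U)
    {p : Submodule 𝕜 E} (hp : IsClosed (p : Set E)) (hfreq : ∃ᶠ z in 𝓝[≠] z₀, f z ∈ p) :
    MapsTo f U p := by
  have hq : EqOn (p.mkQL ∘ f) 0 U :=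
    (p.mkQL.comp_analyticOnNhd hf).eqOn_zero_of_preconnected_of_frequently_eq_zero hU h₀
      (hfreq.mono fun z hz ↦ (Submodule.Quotient.mk_eq_zero p).2 hz)
  exact fun z hz ↦ (Submodule.Quotient.mk_eq_zero p).1 (hq hz)

theorem DifferentiableOn.mapsTo_of_forall_isOfFinOrder {E : Type*} [NormedAddCommGroup E]
    [NormedSpace ℂ E] [CompleteSpace E] {f : ℂ → E} {U : Set ℂ} (hf : DifferentiableOn ℂ f U)
    (hU : IsOpen U)
    (hcirc : ∀ z ∈ U, (connectedComponentIn U z ∩ Metric.sphere (0 : ℂ) 1).Nonempty)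
    {p : Submodule ℂ E} (hp : IsClosed (p : Set E))
    (hroots : ∀ w ∈ U, IsOfFinOrder w → f w ∈ p) :
    MapsTo f U p := by
  intro z hz
  obtain ⟨z₀, hz₀C, hz₀⟩ := hcirc z hz
  have hCU : connectedComponentIn U z ⊆ U := connectedComponentIn_subset U z
  have hfreq : ∃ᶠ w in 𝓝[≠] z₀, f w ∈ p :=
    ((Complex.frequently_isOfFinOrder_nhdsNE (mem_sphere_zero_iff_norm.1 hz₀)).and_eventually
      (eventually_nhdsWithin_of_eventually_nhds
        (hU.connectedComponentIn.eventually_mem hz₀C))).mono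
      fun w ⟨hw, hwC⟩ ↦ hroots w (hCU hwC) hw
  exact ((hf.analyticOnNhd hU).mono hCU).mapsTo_of_frequently_mem
    isPreconnected_connectedComponentIn hz₀C hp hfreq (mem_connectedComponentIn hz)

theorem dense_periodic_points_of_analytic_eigenfields_general
    {X : Type*} [NormedAddCommGroup X] [NormedSpace ℂ X] [CompleteSpace X]
    (T : X →L[ℂ] X)
    {I : Type*}
    (U : Set ℂ) (hU : IsOpen U)
    (E : I → ℂ → X)
    (hanal : ∀ i, DifferentiableOn ℂ (E i) U)
    (heig : ∀ i, ∀ lam ∈ U, T (E i lam) = lam • E i lam)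
    (hspan : Dense ((Submodule.span ℂ {x : X | ∃ i, ∃ lam ∈ U, x = E i lam}) : Set X))
    (hcirc : ∀ z ∈ U, (connectedComponentIn U z ∩ Metric.sphere (0 : ℂ) 1).Nonempty) :
    Dense {x : X | ∃ n : ℕ, 0 < n ∧ (T ^ n) x = x} ∧
      Dense ((Submodule.span ℂ
        {x : X | ∃ lam : ℂ, (∃ n : ℕ, 0 < n ∧ lam ^ n = 1) ∧ T x = lam • x}) : Set X) := by
  set P := Submodule.span ℂ
    {x : X | ∃ lam : ℂ, (∃ n : ℕ, 0 < n ∧ lam ^ n = 1) ∧ T x = lam • x}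
  have hEP : ∀ i, MapsTo (E i) U P.topologicalClosure := fun i ↦
    (hanal i).mapsTo_of_forall_isOfFinOrder hU hcirc P.isClosed_topologicalClosure
      fun w hw hwfin ↦ P.le_topologicalClosure <| Submodule.subset_span
        ⟨w, isOfFinOrder_iff_pow_eq_one.1 hwfin, heig i w hw⟩
  have hP : Dense (P : Set X) := by
    rw [← dense_closure, ← P.topologicalClosure_coe]
    refine hspan.mono (Submodule.span_le.2 ?_)
    rintro _ ⟨i, lam, hlam, rfl⟩
    exact hEP i hlam
  have hPer : P ≤ Module.End.periodicPtsSubmodule (T : Module.End ℂ X) := by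
    refine Submodule.span_le.2 ?_
    rintro x ⟨lam, hlam, hx⟩
    exact Module.End.eigenspace_le_periodicPtsSubmodule _
      (isOfFinOrder_iff_pow_eq_one.2 hlam) (Module.End.mem_eigenspace_iff.2 hx)
  refine ⟨hP.mono fun x hx ↦ ?_, hP⟩
  obtain ⟨n, hn, hxn⟩ := hPer hx
  exact ⟨n, hn, by rw [FunLike.coe_pow_eq_iterate]; exact hxn⟩

/-- Under the same hypotheses (countable family of analytic eigenvector fields `E i : U → X`
spanning a dense subspace, every connected component of the open set `U` meeting the unit
circle), the operator `T` has a dense set of periodic points; in particular the closed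
linear span of the eigenspaces `ker (T - λ)` over all roots of unity `λ` is all of `X`. -/
theorem dense_periodic_points_of_analytic_eigenfields
    {X : Type*} [NormedAddCommGroup X] [NormedSpace ℂ X] [CompleteSpace X]
    [TopologicalSpace.SeparableSpace X]
    (T : X →L[ℂ] X)
    {I : Type*} [Countable I]
    (U : Set ℂ) (hU : IsOpen U)
    (E : I → ℂ → X)
    (hanal : ∀ i, DifferentiableOn ℂ (E i) U)
    (heig : ∀ i, ∀ lam ∈ U, T (E i lam) = lam • E i lam)
    (hspan : Dense ((Submodule.span ℂ {x : X | ∃ i, ∃ lam ∈ U, x = E i lam}) : Set X))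
    (hcirc : ∀ z ∈ U, (connectedComponentIn U z ∩ Metric.sphere (0 : ℂ) 1).Nonempty) :
    Dense {x : X | ∃ n : ℕ, 0 < n ∧ (T ^ n) x = x} ∧
      Dense ((Submodule.span ℂ
        {x : X | ∃ lam : ℂ, (∃ n : ℕ, 0 < n ∧ lam ^ n = 1) ∧ T x = lam • x}) : Set X) :=
  dense_periodic_points_of_analytic_eigenfields_general T U hU E hanal heig hspan hcirc
end
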